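/- Let T be a triangulated category and let (X, Y) and (Y, Z) be stable t-structures in T with Z * X = T. Let Q : T → T/(X ∩ Z) be the Verdier quotient functor. Then the pairs (Q(X), Q(Y)), (Q(Y), Q(Z)), and (Q(Z), Q(X)) are all stable t-structures in T/(X ∩ Z); that is, they form a triangle of recollements. -/

import Mathlib

/-!
Write `S = X ∩ Z` and `Q` for the quotient functor. Since `S ⊆ X`, `S ⊆ Z` and `Hom(Y, S) = 0`,
every morphism of `C/S` out of `Q u`, with `u` in `X`, `Y` or `Z`, has the form `Q f ∘ (Q s)⁻¹`
where the source of `s` lies in the same class as `u`: use right fractions for `X` and `Z`, and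
left fractions together with `Hom(Y, S) = 0` for `Y`. This makes each `Q(U)` closed under
extensions, and reduces `Hom(Q(U), Q(V)) = 0` to `Q f = 0` for morphisms `f : u ⟶ v` of `C`.
For `(X, Y)` and `(Y, Z)` already `f = 0`. For `g : z ⟶ x`, split the cone of `g` along
`Z * X = C`; the octahedral axiom shows that `g` followed by a morphism with cone in `X ∩ Z`
vanishes, so `Q g = 0`. Finally `Q` is triangulated and essentially surjective, so it carries
the decompositions `U * V = C` to `C/S`.
-/

namespace Paper

open CategoryTheory Limits Triangulated Pretriangulated ZeroObject

universe w v u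

variable {C : Type u} [Category.{v} C] [HasZeroObject C] [Preadditive C] [HasShift C ℤ]
  [∀ n : ℤ, (shiftFunctor C n).Additive] [Pretriangulated C]

/-- The subcategory of extensions `X * Y`: objects `e` admitting a distinguished triangle
`x ⟶ e ⟶ y ⟶ x⟦1⟧` with `x ∈ X` and `y ∈ Y`. -/
def star (X Y : Set C) : Set C :=
  {e | ∃ (x y : C) (_ : x ∈ X) (_ : y ∈ Y) (f : x ⟶ e) (g : e ⟶ y) (h : y ⟶ x⟦(1 : ℤ)⟧),
    Triangle.mk f g h ∈ distTriang C}

/-- A (strictly full) triangulated subcategory: a class of objects containing `0`, closed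
under isomorphisms, suspension, desuspension and extensions. -/
structure IsTriangulatedSubcat (S : Set C) : Prop where
  zero_mem : (0 : C) ∈ S
  mem_of_iso : ∀ {a b : C}, (a ≅ b) → a ∈ S → b ∈ S
  shift_mem : ∀ {a : C}, a ∈ S → a⟦(1 : ℤ)⟧ ∈ S
  unshift_mem : ∀ {a : C}, a ∈ S → a⟦(-1 : ℤ)⟧ ∈ S
  ext₂ : ∀ {a e b : C} (f : a ⟶ e) (g : e ⟶ b) (h : b ⟶ a⟦(1 : ℤ)⟧),
    (Triangle.mk f g h ∈ distTriang C) → a ∈ S → b ∈ S → e ∈ S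

/-- A thick subcategory: a triangulated subcategory closed under direct summands
(equivalently, retracts). -/
structure IsThickSubcat (S : Set C) : Prop extends IsTriangulatedSubcat S where
  mem_of_retract : ∀ {a s : C}, s ∈ S → (∃ (i : a ⟶ s) (p : s ⟶ a), i ≫ p = 𝟙 a) → a ∈ S

/-- `(U, V)` is a stable t-structure in the (triangulated sub)category whose class of
objects is `S`: both are triangulated subcategories contained in `S`, `Hom(U, V) = 0`
and `U * V = S`. -/
structure IsStableTStructureIn (S U V : Set C) : Prop where
  subsetU : U ⊆ S
  subsetV : V ⊆ S
  triU : IsTriangulatedSubcat U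
  triV : IsTriangulatedSubcat V
  hom_zero : ∀ {u v : C}, u ∈ U → v ∈ V → ∀ f : u ⟶ v, f = 0
  star_eq : star U V = S

lemma IsTriangulatedSubcat.shift_all {S : Set C} (hS : IsTriangulatedSubcat S) (a : C) (n : ℤ)
    (ha : a ∈ S) : a⟦n⟧ ∈ S := by
  induction n using Int.induction_on with
  | zero => exact hS.mem_of_iso ((shiftFunctorZero C ℤ).app a).symm ha
  | succ i hi =>
      exact hS.mem_of_iso ((shiftFunctorAdd' C (i : ℤ) 1 ((i : ℤ) + 1) rfl).app a).symm
        (hS.shift_mem hi)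
  | pred i hi =>
      exact hS.mem_of_iso
        ((shiftFunctorAdd' C (-(i : ℤ)) (-1) (-(i : ℤ) - 1) (by ring)).app a).symm
        (hS.unshift_mem hi)

/-- The Mathlib `Triangulated.Subcategory` associated to a class of objects satisfying
`IsTriangulatedSubcat`. -/
def IsTriangulatedSubcat.toSubcategory {S : Set C} (hS : IsTriangulatedSubcat S) :
    ObjectProperty C :=
  fun c => c ∈ S

instance IsTriangulatedSubcat.toSubcategory_isTriangulated {S : Set C}
    (hS : IsTriangulatedSubcat S) : hS.toSubcategory.IsTriangulated where
  exists_zero := ⟨0, isZero_zero C, hS.zero_mem⟩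
  isStableUnderShiftBy a := ⟨fun X hX => hS.shift_all X a hX⟩
  ext₂' T hT h₁ h₃ := ObjectProperty.le_isoClosure _ _ (hS.ext₂ T.mor₁ T.mor₂ T.mor₃ hT h₁ h₃)

lemma IsTriangulatedSubcat.inter {X Y : Set C} (hX : IsTriangulatedSubcat X)
    (hY : IsTriangulatedSubcat Y) : IsTriangulatedSubcat (X ∩ Y) where
  zero_mem := ⟨hX.zero_mem, hY.zero_mem⟩
  mem_of_iso := fun e h => ⟨hX.mem_of_iso e h.1, hY.mem_of_iso e h.2⟩
  shift_mem := fun h => ⟨hX.shift_mem h.1, hY.shift_mem h.2⟩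
  unshift_mem := fun h => ⟨hX.unshift_mem h.1, hY.unshift_mem h.2⟩
  ext₂ := fun f g h hT ha hb => ⟨hX.ext₂ f g h hT ha.1 hb.1, hY.ext₂ f g h hT ha.2 hb.2⟩

/-- The Verdier quotient of `C` by the triangulated subcategory `S`. -/
abbrev VerdierQuotient {S : Set C} (hS : IsTriangulatedSubcat S) : Type _ :=
  hS.toSubcategory.trW.Localization

/-- The Verdier quotient functor. -/
noncomputable abbrev Vq {S : Set C} (hS : IsTriangulatedSubcat S) : C ⥤ VerdierQuotient hS :=
  hS.toSubcategory.trW.Q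

/-- The essential image of a class of objects under a functor (the closure under
isomorphisms of the image). -/
def QSet {D : Type*} [Category D] (L : C ⥤ D) (S : Set C) : Set D :=
  {d | ∃ s ∈ S, Nonempty (L.obj s ≅ d)}

/-- The right perpendicular class `X^⊥`. -/
def rightPerp (X : Set C) : Set C := {t | ∀ {x : C}, x ∈ X → ∀ f : x ⟶ t, f = 0}

/-- The left perpendicular class `^⊥X`. -/
def leftPerp (X : Set C) : Set C := {t | ∀ {x : C}, x ∈ X → ∀ f : t ⟶ x, f = 0}


variable [IsTriangulated C]

open MorphismProperty

def HomLiftsFrom {D : Type*} [Category D] (L : C ⥤ D) (U : Set C) : Prop :=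
  ∀ ⦃b : C⦄, b ∈ U → ∀ (c : C) (φ : L.obj b ⟶ L.obj c),
    ∃ b' ∈ U, ∃ (e : L.obj b' ≅ L.obj b) (f : b' ⟶ c), L.map f = e.hom ≫ φ

lemma eq_zero_of_mem_qset {A D : Type*} [Category A] [Category D] [HasZeroMorphisms D]
    {L : A ⥤ D} {U V : Set A} (hL : HomLiftsFrom L U)
    (hUV : ∀ ⦃u v : A⦄, u ∈ U → v ∈ V → ∀ f : u ⟶ v, L.map f = 0)
    {a b : D} (ha : a ∈ QSet L U) (hb : b ∈ QSet L V) (φ : a ⟶ b) : φ = 0 := by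
  obtain ⟨u, hu, ⟨eu⟩⟩ := ha
  obtain ⟨v, hv, ⟨ev⟩⟩ := hb
  obtain ⟨u', hu', e, f, hf⟩ := hL hu v (eu.hom ≫ φ ≫ ev.inv)
  rw [hUV hu' hv f] at hf
  rw [← cancel_epi (e.hom ≫ eu.hom), ← cancel_mono ev.inv]
  simpa using hf.symm

omit [IsTriangulated C] in
lemma shift_mem_qset {D : Type*} [Category D] [HasShift D ℤ] (L : C ⥤ D) [L.CommShift ℤ]
    {U : Set C} (hU : IsTriangulatedSubcat U) (n : ℤ) {a : D} (ha : a ∈ QSet L U) :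
    a⟦n⟧ ∈ QSet L U := by
  obtain ⟨u, hu, ⟨e⟩⟩ := ha
  exact ⟨u⟦n⟧, hU.shift_all u n hu, ⟨(L.commShiftIso n).app u ≪≫ (shiftFunctor D n).mapIso e⟩⟩

section TriangulatedFunctor

variable {D : Type*} [Category D] [HasZeroObject D] [Preadditive D] [HasShift D ℤ]
  [∀ n : ℤ, (shiftFunctor D n).Additive] [Pretriangulated D]
  (L : C ⥤ D) [L.CommShift ℤ] [L.IsTriangulated]

omit [IsTriangulated C] in
lemma mem_qset_of_distTriang {U : Set C} (hU : IsTriangulatedSubcat U) (hL : HomLiftsFrom L U)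
    {a e b : D} (f : a ⟶ e) (g : e ⟶ b) (h : b ⟶ a⟦(1 : ℤ)⟧)
    (hT : Triangle.mk f g h ∈ distTriang D) (ha : a ∈ QSet L U) (hb : b ∈ QSet L U) :
    e ∈ QSet L U := by
  obtain ⟨a₀, ha₀, ⟨ea⟩⟩ := ha
  obtain ⟨b₀, hb₀, ⟨eb⟩⟩ := hb
  obtain ⟨b₁, hb₁, eb₁, k, hk⟩ := hL hb₀ (a₀⟦(1 : ℤ)⟧)
    (eb.hom ≫ h ≫ ea.inv⟦(1 : ℤ)⟧' ≫ (L.commShiftIso (1 : ℤ)).inv.app a₀)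
  obtain ⟨e₀, f₀, g₀, hT₀⟩ := distinguished_cocone_triangle₂ k
  have comm : (L.map k ≫ (L.commShiftIso (1 : ℤ)).hom.app a₀) ≫ ea.hom⟦(1 : ℤ)⟧' =
      (eb₁ ≪≫ eb).hom ≫ h := by
    simp [hk, ← Functor.map_comp]
  exact ⟨e₀, hU.ext₂ f₀ g₀ k hT₀ ha₀ hb₁, ⟨Triangle.π₂.mapIso
    (isoTriangleOfIso₁₃ _ _ (L.map_distinguished _ hT₀) hT ea (eb₁ ≪≫ eb) comm)⟩⟩

omit [IsTriangulated C] in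
lemma isTriangulatedSubcat_qset {U : Set C} (hU : IsTriangulatedSubcat U)
    (hL : HomLiftsFrom L U) : IsTriangulatedSubcat (QSet L U) where
  zero_mem := ⟨0, hU.zero_mem, ⟨L.mapZeroObject⟩⟩
  mem_of_iso := by
    rintro a b i ⟨u, hu, ⟨j⟩⟩
    exact ⟨u, hu, ⟨j ≪≫ i⟩⟩
  shift_mem := shift_mem_qset L hU 1
  unshift_mem := shift_mem_qset L hU (-1)
  ext₂ := mem_qset_of_distTriang L hU hL

omit [IsTriangulated C] in
lemma star_qset_eq_univ [L.EssSurj] {U V : Set C} (hUV : star U V = Set.univ) :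
    star (QSet L U) (QSet L V) = Set.univ := by
  refine Set.eq_univ_of_forall fun d => ?_
  have ht : L.objPreimage d ∈ star U V := hUV ▸ Set.mem_univ _
  obtain ⟨u, v, hu, hv, f, g, h, hT⟩ := ht
  have hLT : Triangle.mk (L.map f) (L.map g) (L.map h ≫ (L.commShiftIso (1 : ℤ)).hom.app u) ∈
      distTriang D := L.map_distinguished _ hT
  obtain ⟨e⟩ : Nonempty (L.obj (L.objPreimage d) ≅ d) := ⟨L.objObjPreimageIso d⟩
  refine ⟨L.obj u, L.obj v, ⟨u, hu, ⟨Iso.refl _⟩⟩, ⟨v, hv, ⟨Iso.refl _⟩⟩, L.map f ≫ e.hom,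
    e.inv ≫ L.map g, L.map h ≫ (L.commShiftIso (1 : ℤ)).hom.app u,
    isomorphic_distinguished _ hLT _ ?_⟩
  exact Triangle.isoMk _ _ (Iso.refl _) e.symm (Iso.refl _) (by simp [Triangle.mk])
    (by simp [Triangle.mk]) (by simp [Triangle.mk])

omit [IsTriangulated C] in
lemma isStableTStructureIn_univ_qset [L.EssSurj] {U V : Set C} (hU : IsTriangulatedSubcat U)
    (hV : IsTriangulatedSubcat V) (hLU : HomLiftsFrom L U) (hLV : HomLiftsFrom L V)
    (hUV : ∀ ⦃u v : C⦄, u ∈ U → v ∈ V → ∀ f : u ⟶ v, L.map f = 0)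
    (hstar : star U V = Set.univ) :
    IsStableTStructureIn Set.univ (QSet L U) (QSet L V) where
  subsetU := Set.subset_univ _
  subsetV := Set.subset_univ _
  triU := isTriangulatedSubcat_qset L hU hLU
  triV := isTriangulatedSubcat_qset L hV hLV
  hom_zero := eq_zero_of_mem_qset hLU hUV
  star_eq := star_qset_eq_univ L hstar

end TriangulatedFunctor

section VerdierQuotient

variable {S : Set C} (hS : IsTriangulatedSubcat S)

lemma homLiftsFrom_vq_of_subset {U : Set C} (hU : IsTriangulatedSubcat U) (hSU : S ⊆ U) :
    HomLiftsFrom (Vq hS) U := by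
  intro b hb c φ
  obtain ⟨ρ, hρ⟩ := Localization.exists_rightFraction (Vq hS) hS.toSubcategory.trW φ
  obtain ⟨s, _, _, hTs, hs⟩ := ρ.hs
  have := Localization.inverts (Vq hS) hS.toSubcategory.trW _ ρ.hs
  refine ⟨ρ.X', hU.ext₂ _ _ _ (inv_rot_of_distTriang _ hTs) (hU.unshift_mem (hSU hs)) hb,
    asIso ((Vq hS).map ρ.s), ρ.f, ?_⟩
  rw [hρ, asIso_hom, RightFraction.map_s_comp_map]

lemma homLiftsFrom_vq_of_hom_zero {U : Set C}
    (hUS : ∀ ⦃u s : C⦄, u ∈ U → s ∈ S → ∀ f : u ⟶ s, f = 0) : HomLiftsFrom (Vq hS) U := by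
  intro b hb c φ
  obtain ⟨ρ, hρ⟩ := Localization.exists_leftFraction (Vq hS) hS.toSubcategory.trW φ
  obtain ⟨s, _, _, hTs, hs⟩ := ρ.hs
  obtain ⟨d, hd⟩ : ∃ d : b ⟶ c, ρ.f = d ≫ ρ.s :=
    Triangle.coyoneda_exact₂ _ hTs ρ.f (hUS hb hs _)
  have := Localization.inverts (Vq hS) hS.toSubcategory.trW _ ρ.hs
  refine ⟨b, hb, Iso.refl _, d, ?_⟩
  rw [← cancel_mono ((Vq hS).map ρ.s), Iso.refl_hom, Category.id_comp, hρ,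
    LeftFraction.map_comp_map_s, hd, Functor.map_comp]

lemma vq_map_eq_zero_of_star_eq_univ {X Z : Set C} (hX : IsTriangulatedSubcat X)
    (hZ : IsTriangulatedSubcat Z) (hZX : star Z X = Set.univ) (hXZ : X ∩ Z ⊆ S)
    {z x : C} (hz : z ∈ Z) (hx : x ∈ X) (g : z ⟶ x) : (Vq hS).map g = 0 := by
  obtain ⟨c, u, v, hT⟩ := distinguished_cocone_triangle g
  have hc : c ∈ star Z X := hZX ▸ Set.mem_univ _
  obtain ⟨z₂, x₂, hz₂, hx₂, p, q, r, hT₂⟩ := hc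
  obtain ⟨m, w, w', hT₃⟩ := distinguished_cocone_triangle (u ≫ q)
  -- the cone `m` of `u ≫ q` lies in `Z` by the octahedron `z⟦1⟧ ⟶ m ⟶ z₂⟦1⟧`, and in `X`
  have O := someOctahedron rfl (rot_of_distTriang _ hT) (rot_of_distTriang _ hT₂) hT₃
  have hmZ : m ∈ Z := hZ.ext₂ O.m₁ O.m₃ _ O.mem (hZ.shift_mem hz) (hZ.shift_mem hz₂)
  have hmX : m ∈ X := hX.ext₂ _ _ _ (rot_of_distTriang _ hT₃) hx₂ (hX.shift_mem hx)
  have := Localization.inverts (Vq hS) hS.toSubcategory.trW _ ⟨m, w, w', hT₃, hXZ ⟨hmX, hmZ⟩⟩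
  have hgu : g ≫ u = 0 := comp_distTriang_mor_zero₁₂ _ hT
  rw [← cancel_mono ((Vq hS).map (u ≫ q)), ← Functor.map_comp, ← Category.assoc, hgu,
    zero_comp, Functor.map_zero, zero_comp]

end VerdierQuotient

/-- **Theorem C** (triangle of recollements).  Let `(X, Y)` and `(Y, Z)` be stable
t-structures in `C` with `Z * X = C`, and let `Q : C ⥤ C/(X ∩ Z)` be the Verdier quotient
functor.  Then `(Q(X), Q(Y))`, `(Q(Y), Q(Z))` and `(Q(Z), Q(X))` are stable t-structures
in `C/(X ∩ Z)`. -/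
theorem statement7 {X Y Z : Set C} (hXY : IsStableTStructureIn Set.univ X Y)
    (hYZ : IsStableTStructureIn Set.univ Y Z) (hZX : star Z X = Set.univ) :
    IsStableTStructureIn Set.univ
        (QSet (Vq (hXY.triU.inter hYZ.triV)) X) (QSet (Vq (hXY.triU.inter hYZ.triV)) Y) ∧
      IsStableTStructureIn Set.univ
        (QSet (Vq (hXY.triU.inter hYZ.triV)) Y) (QSet (Vq (hXY.triU.inter hYZ.triV)) Z) ∧
      IsStableTStructureIn Set.univ
        (QSet (Vq (hXY.triU.inter hYZ.triV)) Z) (QSet (Vq (hXY.triU.inter hYZ.triV)) X) := by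
  set hS := hXY.triU.inter hYZ.triV
  have liftX := homLiftsFrom_vq_of_subset hS hXY.triU Set.inter_subset_left
  have liftY := homLiftsFrom_vq_of_hom_zero hS fun _ _ hy hs f => hYZ.hom_zero hy hs.2 f
  have liftZ := homLiftsFrom_vq_of_subset hS hYZ.triV Set.inter_subset_right
  refine ⟨isStableTStructureIn_univ_qset _ hXY.triU hXY.triV liftX liftY ?_ hXY.star_eq,
    isStableTStructureIn_univ_qset _ hYZ.triU hYZ.triV liftY liftZ ?_ hYZ.star_eq,
    isStableTStructureIn_univ_qset _ hYZ.triV hXY.triU liftZ liftX ?_ hZX⟩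
  · exact fun _ _ hx hy f => by rw [hXY.hom_zero hx hy f, Functor.map_zero]
  · exact fun _ _ hy hz f => by rw [hYZ.hom_zero hy hz f, Functor.map_zero]
  · exact fun _ _ hz hx g =>
      vq_map_eq_zero_of_star_eq_univ hS hXY.triU hYZ.triV hZX subset_rfl hz hx g

end Paper
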